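/- arXiv:1702.06388 — 6 statements merged into one kernel-verified Lean document; each statement's English description precedes it below -/
import Mathlib

section
/- Normality is anti-hereditary: if B is a normal vertex of a quiver and A is an ancestor of B (i.e. A ≤ B), then A is normal. -/
universe u
variable {V : Type u} [Quiver V]

/-- An evolution of length `m` with vertex sequence `A 0, A 1, ..., A m`:
for each `k < m` there is an edge from `A (k+1)` to `A k`
(the paper's evolution `A 0 ← A 1 ← ⋯ ← A m`). -/
def IsEvol (A : ℕ → V) (m : ℕ) : Prop := ∀ k < m, Nonempty (A (k + 1) ⟶ A k)

/-- `Anc X Y` : `X` is an ancestor of `Y`, i.e. there is an evolution from `X` to `Y`. -/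
def Anc (X Y : V) : Prop := ∃ (m : ℕ) (A : ℕ → V), IsEvol A m ∧ A 0 = X ∧ A m = Y

/-- `X` and `Y` are isotypic. -/
def Isotypic (X Y : V) : Prop := Anc X Y ∧ Anc Y X

/-- A vertex is primitive if every ancestor of it is isotypic to it. -/
def Primitive (X : V) : Prop := ∀ B : V, Anc B X → Anc X B

/-- A full evolution for `X` : an evolution from a primitive vertex to `X`. -/
def IsFullEvol (A : ℕ → V) (m : ℕ) (X : V) : Prop :=
  IsEvol A m ∧ Primitive (A 0) ∧ A m = X

/-- The height of a vertex: the least length of a full evolution for it (`⊤` if none). -/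
noncomputable def height (X : V) : ℕ∞ :=
  sInf {n : ℕ∞ | ∃ m : ℕ, n = (m : ℕ∞) ∧ ∃ A : ℕ → V, IsFullEvol A m X}

/-- `A` is a critical ancestor of `B`. -/
def CritAnc (A B : V) : Prop :=
  height A < ⊤ ∧ ∃ (m : ℕ) (E : ℕ → V), 0 < m ∧ IsEvol E m ∧ E 0 = A ∧ E m = B ∧
    height (E 1) = height A + 1

/-- A vertex is normal if any two of its critical ancestors of equal height are isotypic. -/
def NormalVtx (B : V) : Prop :=
  ∀ A A' : V, CritAnc A B → CritAnc A' B → height A = height A' → Isotypic A A'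

/-- The evolution `(A, m)` embeds in the evolution `(B, n)`. -/
def Embeds (A : ℕ → V) (m : ℕ) (B : ℕ → V) (n : ℕ) : Prop :=
  m ≤ n ∧ ∃ r : ℕ → ℕ, (∀ k < m, r k < r (k + 1)) ∧ r m ≤ n ∧
    ∀ k ≤ m, Isotypic (A k) (B (r k))

/-- A universal evolution for `X`: a full evolution for `X` embedding in every
full evolution for `X`. -/
def IsUniversalEvol (A : ℕ → V) (m : ℕ) (X : V) : Prop :=
  IsFullEvol A m X ∧ ∀ (B : ℕ → V) (n : ℕ), IsFullEvol B n X → Embeds A m B n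

/-- A vertex is phylogenetic if it admits a universal evolution. -/
def Phylogenetic (X : V) : Prop := ∃ (A : ℕ → V) (m : ℕ), IsUniversalEvol A m X

/-- A quiver is monotonous if `h(A) ≥ h(B)` for every edge `A → B`. -/
def Monotonous (V : Type u) [Quiver V] : Prop :=
  ∀ A B : V, Nonempty (A ⟶ B) → height B ≤ height A

/-- A vertex `A` is regular if for every descendant `B` of `A` with `h(B) = h(A)`
there is an edge `B → A`. -/
def Regular (A : V) : Prop :=
  ∀ B : V, Anc A B → height B = height A → Nonempty (B ⟶ A)

/-- The clade of a vertex `A`: the full subquiver of descendants of `A`. -/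
abbrev Clade (A : V) : Type u := {B : V // Anc A B}

instance (A : V) : Quiver (Clade A) := ⟨fun X Y => X.val ⟶ Y.val⟩

lemma critAnc_of_anc {X A B : V} (h : CritAnc X A) (hAB : Anc A B) : CritAnc X B := by
  obtain ⟨hX, m, E, hm, hE, hE0, hEm, h1⟩ := h
  obtain ⟨n, D, hD, hD0, hDn⟩ := hAB
  refine ⟨hX, m + n, fun k => if k < m then E k else D (k - m), by omega, ?_, ?_, ?_, ?_⟩
  · intro k hk
    by_cases h1 : k + 1 < m
    · simp only [h1, if_pos (by omega : k < m)]
      exact hE k (by omega)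
    · by_cases h2 : k < m
      · have hk1 : k + 1 = m := by omega
        have : D (m - m) = E m := by simp [hD0, hEm]
        simp only [hk1, if_neg (lt_irrefl m), if_pos h2, this]
        rw [← hk1]; exact hE k h2
      · simp only [if_neg h1, if_neg h2]
        have : k + 1 - m = (k - m) + 1 := by omega
        rw [this]
        exact hD (k - m) (by omega)
  · simp [hm, hE0]
  · simp only [if_neg (by omega : ¬ m + n < m)]
    simpa using hDn
  · by_cases h2 : 1 < m
    · simpa [h2] using h1
    · have hm1 : m = 1 := by omega
      simp only [if_neg (by omega : ¬ (1:ℕ) < m)]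
      have : D (1 - m) = E 1 := by simp [hm1, hD0, ← hEm]
      rw [this]; exact h1

theorem stmt_6 (A B : V) (hB : NormalVtx B) (hAB : Anc A B) : NormalVtx A := by
  intro X X' h1 h2 hh
  exact hB X X' (critAnc_of_anc h1 hAB) (critAnc_of_anc h2 hAB) hh
end

section
/- Any normal vertex of finite height in a quiver is phylogenetic: if X is normal and h(X) < ∞, then there exists a universal evolution for X. -/
universe u
variable {V : Type u} [Quiver V]

/-!
Take a short full evolution `C` of `X`, of length `n = h(X)`; along it `h(C k) = k`. In any full
evolution `B` of `X`, heights start at `0`, end at `n` and grow by at most one per edge, so for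
each `k < n` the last vertex `B (r k)` of height `≤ k` has height exactly `k` and is followed by a
vertex of height `k + 1`. Then `C k` and `B (r k)` are critical ancestors of `X` of equal height,
hence isotypic by normality, and `r` is increasing: `C` embeds in `B`.
-/

lemma exists_increasing_level_crossings {f : ℕ → ℕ∞} {N n : ℕ}
    (hstep : ∀ j < N, f (j + 1) ≤ f j + 1) (h0 : f 0 = 0) (hN : f N = n) :
    ∃ r : ℕ → ℕ, (∀ k < n, r k < r (k + 1)) ∧ r n = N ∧
      ∀ k < n, r k < N ∧ f (r k) = k ∧ f (r k + 1) = k + 1 := by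
  classical
  set r : ℕ → ℕ := fun k => Nat.findGreatest (fun j => f j ≤ k) N
  have hcross : ∀ k < n, r k < N ∧ f (r k) = k ∧ f (r k + 1) = k + 1 := by
    intro k hk
    have hle : f (r k) ≤ k := Nat.findGreatest_spec (P := fun j => f j ≤ k) (Nat.zero_le N)
      (show f 0 ≤ k by simp [h0])
    have hrN : r k < N := by
      refine (Nat.findGreatest_le N).lt_of_ne fun h => ?_
      rw [show r k = N from h, hN] at hle
      exact absurd (by exact_mod_cast hle : n ≤ k) (by omega)
    have hnext : (k : ℕ∞) < f (r k + 1) :=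
      not_le.mp (Nat.findGreatest_is_greatest (Nat.lt_succ_self _) hrN)
    have hsucc : f (r k + 1) = k + 1 :=
      le_antisymm ((hstep _ hrN).trans (by gcongr))
        (ENat.natCast_add_one_le_iff.mpr hnext)
    have hjump : (k : ℕ∞) + 1 ≤ f (r k) + 1 := hsucc ▸ hstep _ hrN
    exact ⟨hrN, le_antisymm hle
      (ENat.natCast_lt_add_one_iff.mp (ENat.natCast_add_one_le_iff.mp hjump)), hsucc⟩
  refine ⟨r, fun k hk => ?_, Nat.findGreatest_eq hN.le, hcross⟩
  obtain ⟨hrN, -, hsucc⟩ := hcross k (by omega)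
  exact Nat.le_findGreatest hrN (by rw [hsucc]; push_cast; rfl)

section Quiver

variable {A C : ℕ → V} {m n : ℕ} {X Y : V}

lemma isEvol_zero (A : ℕ → V) : IsEvol A 0 :=
  fun _ h => absurd h (Nat.not_lt_zero _)

lemma isotypic_refl (X : V) : Isotypic X X :=
  ⟨⟨0, fun _ => X, isEvol_zero _, rfl, rfl⟩, ⟨0, fun _ => X, isEvol_zero _, rfl, rfl⟩⟩

lemma IsEvol.mono (h : IsEvol A m) {k : ℕ} (hk : k ≤ m) : IsEvol A k :=
  fun i hi => h i (by omega)

lemma IsEvol.shift (h : IsEvol A m) (j : ℕ) : IsEvol (fun i => A (j + i)) (m - j) :=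
  fun i hi => h (j + i) (by omega)

lemma IsFullEvol.take (h : IsFullEvol A m X) {k : ℕ} (hk : k ≤ m) : IsFullEvol A k (A k) :=
  ⟨h.1.mono hk, h.2.1, rfl⟩

lemma IsFullEvol.snoc (h : IsFullEvol A m X) (e : Nonempty (Y ⟶ X)) :
    IsFullEvol (Function.update A (m + 1) Y) (m + 1) Y := by
  refine ⟨fun k hk => ?_, ?_, Function.update_self ..⟩
  · rcases (Nat.lt_succ_iff.mp hk).lt_or_eq with hk | rfl
    · rw [Function.update_of_ne (by omega), Function.update_of_ne (by omega)]
      exact h.1 k hk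
    · rw [Function.update_self, Function.update_of_ne (by omega), h.2.2]
      exact e
  · rw [Function.update_of_ne (by omega)]
    exact h.2.1

lemma height_le_of_isFullEvol (h : IsFullEvol A m X) : height X ≤ m :=
  sInf_le ⟨m, rfl, A, h⟩

lemma exists_isFullEvol_height_eq (h : height X < ⊤) :
    ∃ (A : ℕ → V) (m : ℕ), IsFullEvol A m X ∧ height X = m := by
  set S := {n : ℕ∞ | ∃ m : ℕ, n = m ∧ ∃ A : ℕ → V, IsFullEvol A m X}
  have hS : S.Nonempty :=
    Set.nonempty_iff_ne_empty.mpr fun hS => h.ne (show sInf S = ⊤ by rw [hS, sInf_empty])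
  obtain ⟨m, hm, A, hA⟩ := csInf_mem hS
  exact ⟨A, m, hA, hm⟩

lemma height_eq_zero_of_primitive (hX : Primitive X) : height X = 0 := by
  simpa using height_le_of_isFullEvol (A := fun _ => X) (m := 0)
    ⟨isEvol_zero _, hX, rfl⟩

lemma height_le_height_add_one (e : Nonempty (Y ⟶ X)) : height Y ≤ height X + 1 := by
  obtain hX_top | hX_fin := (le_top : height X ≤ ⊤).eq_or_lt
  · simp [hX_top]
  obtain ⟨A, m, hA, hm⟩ := exists_isFullEvol_height_eq hX_fin
  calc height Y ≤ (m + 1 : ℕ) := height_le_of_isFullEvol (hA.snoc e)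
    _ = height X + 1 := by rw [hm]; push_cast; rfl

lemma height_le_height_add_of_isEvol (h : IsEvol A m) : height (A m) ≤ height (A 0) + m := by
  induction m with
  | zero => simp
  | succ m ih =>
    calc height (A (m + 1)) ≤ height (A m) + 1 := height_le_height_add_one (h m m.lt_succ_self)
      _ ≤ height (A 0) + m + 1 := by gcongr; exact ih (h.mono m.le_succ)
      _ = height (A 0) + (m + 1 : ℕ) := by push_cast; ring

lemma height_eq_of_isFullEvol_of_height_eq (hC : IsFullEvol C n X) (hn : height X = n)
    {k : ℕ} (hk : k ≤ n) : height (C k) = k := by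
  have hle : height (C k) ≤ k := height_le_of_isFullEvol (hC.take hk)
  have hge : height X ≤ height (C k) + (n - k : ℕ) := by
    simpa [Nat.add_sub_cancel' hk, hC.2.2] using height_le_height_add_of_isEvol (hC.1.shift k)
  lift height (C k) to ℕ using ne_top_of_le_ne_top (ENat.natCast_ne_top k) hle with h
  rw [hn] at hge
  norm_cast at hle hge ⊢
  omega

lemma critAnc_of_isEvol (hA : IsEvol A m) (hAm : A m = X) {j : ℕ} (hj : j < m)
    (hfin : height (A j) < ⊤) (hsucc : height (A (j + 1)) = height (A j) + 1) :
    CritAnc (A j) X :=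
  ⟨hfin, m - j, fun i => A (j + i), by omega, hA.shift j, rfl,
    show A (j + (m - j)) = X by rw [Nat.add_sub_cancel' hj.le, hAm], hsucc⟩

end Quiver

theorem stmt_7 (X : V) (h1 : NormalVtx X) (h2 : height X < ⊤) : Phylogenetic X := by
  obtain ⟨C, n, hC, hn⟩ := exists_isFullEvol_height_eq h2
  refine ⟨C, n, hC, fun B N hB => ?_⟩
  obtain ⟨r, hr_mono, hrN, hr⟩ := exists_increasing_level_crossings (f := fun j => height (B j))
    (fun j hj => height_le_height_add_one (hB.1 j hj)) (height_eq_zero_of_primitive hB.2.1)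
    (by rw [hB.2.2, hn])
  have hnN : (n : ℕ∞) ≤ N := hn ▸ height_le_of_isFullEvol hB
  refine ⟨by exact_mod_cast hnN, r, hr_mono, hrN.le, fun k hk => ?_⟩
  obtain hk | rfl := hk.lt_or_eq
  · obtain ⟨hrkN, hBr, hBr1⟩ := hr k hk
    have hCk := height_eq_of_isFullEvol_of_height_eq hC hn hk.le
    have hCk1 := height_eq_of_isFullEvol_of_height_eq hC hn hk
    refine h1 _ _ (critAnc_of_isEvol hC.1 hC.2.2 hk (hCk ▸ ENat.natCast_lt_top k) ?_)
      (critAnc_of_isEvol hB.1 hB.2.2 hrkN (hBr ▸ ENat.natCast_lt_top k)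
        (by rw [hBr1, hBr]))
      (hCk.trans hBr.symm)
    rw [hCk1, hCk]
    push_cast
    rfl
  · rw [hrN, hC.2.2, hB.2.2]
    exact isotypic_refl X
end

section
/- Let X be a phylogenetic vertex of a quiver. Then every short full evolution for X (i.e. every full evolution for X of length h(X)) is universal. -/
universe u
variable {V : Type u} [Quiver V]

lemma anc_trans {X Y Z : V} (h1 : Anc X Y) (h2 : Anc Y Z) : Anc X Z := by
  obtain ⟨m, A, hA, hA0, hAm⟩ := h1
  obtain ⟨n, B, hB, hB0, hBn⟩ := h2
  refine ⟨m + n, fun k => if k ≤ m then A k else B (k - m), ?_, ?_, ?_⟩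
  · intro k hk
    by_cases h : k + 1 ≤ m
    · simpa [h, le_of_lt (lt_of_lt_of_le (Nat.lt_succ_self k) h)] using hA k (by omega)
    · by_cases h' : k ≤ m
      · have hkm : k = m := by omega
        have hn : 0 < n := by omega
        have := hB 0 hn
        simp only [if_neg h, if_pos (le_of_eq hkm)]
        have e1 : k + 1 - m = 1 := by omega
        rw [e1, hkm, hAm, ← hB0]
        exact this
      · simp only [if_neg h, if_neg h']
        have e1 : k + 1 - m = (k - m) + 1 := by omega
        rw [e1]
        exact hB (k - m) (by omega)
  · simp [hA0]
  · by_cases h : m + n ≤ m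
    · have hn : n = 0 := by omega
      subst hn
      simp only [Nat.add_zero, if_pos le_rfl]
      rw [hAm, ← hB0, hBn]
    · simp only [if_neg h]
      have : m + n - m = n := by omega
      rw [this, hBn]

lemma isotypic_symm {X Y : V} (h : Isotypic X Y) : Isotypic Y X := ⟨h.2, h.1⟩

lemma isotypic_trans {X Y Z : V} (h1 : Isotypic X Y) (h2 : Isotypic Y Z) :
    Isotypic X Z := ⟨anc_trans h1.1 h2.1, anc_trans h2.2 h1.2⟩

theorem stmt_10 (X : V) (hX : Phylogenetic X) (A : ℕ → V) (m : ℕ)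
    (hfull : IsFullEvol A m X) (hshort : (m : ℕ∞) = height X) :
    IsUniversalEvol A m X := by
  obtain ⟨U, u, hUfull, hUuniv⟩ := hX
  have hle : height X ≤ (u : ℕ∞) := sInf_le ⟨u, rfl, U, hUfull⟩
  obtain ⟨hum, r, hr1, hr2, hr3⟩ := hUuniv A m hfull
  have hmu : m ≤ u := by
    rw [← hshort] at hle
    exact_mod_cast hle
  have hm : u = m := le_antisymm hum hmu
  rw [hm] at hr1 hr2 hr3 hUuniv
  -- r is the identity on [0, m]
  have H1 : ∀ k j, k + j ≤ m → r k + j ≤ r (k + j) := by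
    intro k j
    induction j with
    | zero => simp
    | succ j ih =>
      intro hkj
      have h1 := ih (by omega)
      have h2 := hr1 (k + j) (by omega)
      have h3 : k + (j + 1) = k + j + 1 := rfl
      rw [h3]
      omega
  have hrk : ∀ k ≤ m, r k = k := by
    intro k hk
    have h1 := H1 0 k (by omega)
    rw [Nat.zero_add] at h1
    have h2 := H1 k (m - k) (by omega)
    have h3 : k + (m - k) = m := by omega
    rw [h3] at h2
    omega
  refine ⟨hfull, ?_⟩
  intro B n hB
  obtain ⟨hmn, s, hs1, hs2, hs3⟩ := hUuniv B n hB
  refine ⟨hmn, s, hs1, hs2, ?_⟩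
  intro k hk
  have h1 : Isotypic (A k) (U k) := by
    have := hr3 k hk
    rw [hrk k hk] at this
    exact isotypic_symm this
  exact isotypic_trans h1 (hs3 k hk)
end

section
/- In a monotonous quiver, universal evolutions for isotypic phylogenetic vertices are isotypic: if A_0 ← ⋯ ← A_m is a universal evolution for a phylogenetic vertex X = A_m, B_0 ← ⋯ ← B_n is a universal evolution for a phylogenetic vertex Y = B_n, and X ∼ Y, then m = n and A_k ∼ B_k for all k = 0, 1, ..., m. -/
universe u
variable {V : Type u} [Quiver V]

private lemma evol_height_mono (hmon : Monotonous V) (C : ℕ → V) (p : ℕ) (hC : IsEvol C p) :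
    ∀ a b, a ≤ b → b ≤ p → height (C a) ≤ height (C b) := by
  have key : ∀ d a, a + d ≤ p → height (C a) ≤ height (C (a + d)) := by
    intro d
    induction d with
    | zero => intro a _; simp
    | succ d ih =>
      intro a h
      have h1 := ih a (by omega)
      have h2 := hmon (C (a + d + 1)) (C (a + d)) (hC (a + d) (by omega))
      have : a + (d + 1) = a + d + 1 := by omega
      rw [this]
      exact le_trans h1 h2
  intro a b hab hbp
  have := key (b - a) a (by omega)
  have hba : a + (b - a) = b := by omega
  rwa [hba] at this

private lemma anc_height_mono (hmon : Monotonous V) {P Q : V} (h : Anc P Q) :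
    height P ≤ height Q := by
  obtain ⟨p, C, hC, h0, hp⟩ := h
  have := evol_height_mono hmon C p hC 0 p (Nat.zero_le _) le_rfl
  rwa [h0, hp] at this

private lemma iso_height_eq (hmon : Monotonous V) {P Q : V} (h : Isotypic P Q) :
    height P = height Q :=
  le_antisymm (anc_height_mono hmon h.1) (anc_height_mono hmon h.2)

/-- Concatenate a full evolution for `A k` with the tail of `A`. -/
private lemma concat_full {W : V} (F : ℕ → V) (j : ℕ) (hF : IsFullEvol F j W)
    (A : ℕ → V) (m k : ℕ) (hA : IsEvol A m) (hk : k ≤ m) (hW : A k = W) :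
    ∃ G : ℕ → V, IsFullEvol G (j + (m - k)) (A m) := by
  refine ⟨fun i => if i ≤ j then F i else A (k + (i - j)), ?_, ?_, ?_⟩
  · intro i hi
    by_cases h1 : i + 1 ≤ j
    · simp only [h1, le_trans (Nat.le_succ i) h1, if_pos]
      exact hF.1 i (by omega)
    · have hij : ¬ (i + 1 ≤ j) := h1
      simp only [hij, if_neg, not_false_iff]
      have hGi : (if i ≤ j then F i else A (k + (i - j))) = A (k + (i - j)) := by
        by_cases h2 : i ≤ j
        · have : i = j := by omega
          subst this
          simp [hF.2.2, hW.symm]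
        · simp [h2]
      rw [hGi]
      have : k + (i + 1 - j) = k + (i - j) + 1 := by omega
      rw [this]
      exact hA (k + (i - j)) (by omega)
  · simpa using hF.2.1
  · by_cases h2 : j + (m - k) ≤ j
    · have hmk : m = k := by omega
      simp only [h2, if_pos]
      have : j + (m - k) = j := by omega
      rw [this, hF.2.2, ← hW, hmk]
    · simp only [h2, if_neg, not_false_iff]
      congr 1
      omega

/-- In a universal evolution, the height of the `k`-th vertex is `k`. -/
private lemma univ_height (A : ℕ → V) (m : ℕ) (hA : IsUniversalEvol A m (A m)) :
    ∀ k ≤ m, height (A k) = (k : ℕ∞) := by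
  intro k hk
  refine le_antisymm ?_ ?_
  · exact sInf_le ⟨k, rfl, A, fun i hi => hA.1.1 i (by omega), hA.1.2.1, rfl⟩
  · refine le_sInf ?_
    rintro s ⟨j, rfl, F, hF⟩
    obtain ⟨G, hG⟩ := concat_full F j hF A m k hA.1.1 hk rfl
    have hemb := hA.2 G (j + (m - k)) hG
    have hm := hemb.1
    exact_mod_cast (by omega : k ≤ j)

theorem stmt_14 (hmon : Monotonous V) (A B : ℕ → V) (m n : ℕ)
    (hA : IsUniversalEvol A m (A m)) (hB : IsUniversalEvol B n (B n))
    (hiso : Isotypic (A m) (B n)) :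
    m = n ∧ ∀ k ≤ m, Isotypic (A k) (B k) := by
  have hAk := univ_height A m hA
  have hBk := univ_height B n hB
  have hmn : m = n := by
    have h1 := iso_height_eq hmon hiso
    rw [hAk m le_rfl, hBk n le_rfl] at h1
    exact_mod_cast h1
  subst hmn
  refine ⟨rfl, ?_⟩
  obtain ⟨p, C, hC, hC0, hCp⟩ := hiso.2
  have hCk : ∀ i ≤ p, height (C i) = (m : ℕ∞) := by
    intro i hi
    have h1 := evol_height_mono hmon C p hC 0 i (Nat.zero_le _) hi
    have h2 := evol_height_mono hmon C p hC i p hi le_rfl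
    rw [hC0, hBk m le_rfl] at h1
    rw [hCp, hAk m le_rfl] at h2
    exact le_antisymm h2 h1
  set D : ℕ → V := fun i => if i ≤ m then B i else C (i - m) with hD
  have hDle : ∀ i ≤ m, D i = B i := by intro i hi; simp [hD, hi]
  have hDfull : IsFullEvol D (m + p) (A m) := by
    refine ⟨?_, ?_, ?_⟩
    · intro i hi
      by_cases h1 : i + 1 ≤ m
      · have e1 : D (i + 1) = B (i + 1) := hDle _ h1
        have e2 : D i = B i := hDle _ (by omega)
        rw [e1, e2]
        exact hB.1.1 i (by omega)
      · have hGi : D i = C (i - m) := by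
          by_cases h2 : i ≤ m
          · have him : i = m := by omega
            subst him
            rw [hDle i le_rfl, ← hC0]
            congr 1
            omega
          · simp [hD, h2]
        have hGi1 : D (i + 1) = C (i + 1 - m) := by simp [hD, h1]
        rw [hGi, hGi1]
        have : i + 1 - m = (i - m) + 1 := by omega
        rw [this]
        exact hC (i - m) (by omega)
    · rw [hDle 0 (Nat.zero_le _)]; exact hB.1.2.1
    · by_cases hp : p = 0
      · subst hp
        rw [show m + 0 = m from rfl, hDle m le_rfl, ← hC0, hCp]
      · have : ¬ (m + p ≤ m) := by omega
        simp only [hD, this, if_neg, not_false_iff]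
        rw [show m + p - m = p by omega, hCp]
  obtain ⟨hmle, r, hrmono, hrle, hriso⟩ := hA.2 D (m + p) hDfull
  have hrm : ∀ a b, a ≤ b → b ≤ m → r a ≤ r b := by
    have key : ∀ d a, a + d ≤ m → r a ≤ r (a + d) := by
      intro d
      induction d with
      | zero => intro a _; simp
      | succ d ih =>
        intro a h
        have h1 := ih a (by omega)
        have h2 := hrmono (a + d) (by omega)
        rw [show a + (d + 1) = a + d + 1 from rfl]
        omega
    intro a b hab hbm
    have := key (b - a) a (by omega)
    rwa [show a + (b - a) = b by omega] at this
  intro k hk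
  rcases eq_or_lt_of_le hk with heq | hlt
  · subst heq; exact hiso
  · have hiso' := hriso k hk
    have hh := iso_height_eq hmon hiso'
    rw [hAk k hk] at hh
    by_cases hrk : r k ≤ m
    · have hDrk : D (r k) = B (r k) := hDle _ hrk
      rw [hDrk, hBk (r k) hrk] at hh
      have hke : k = r k := by exact_mod_cast hh
      rw [hDrk, ← hke] at hiso'
      exact hiso'
    · exfalso
      have hle : r k ≤ m + p := le_trans (hrm k m hk le_rfl) hrle
      have hDrk : D (r k) = C (r k - m) := by simp [hD, hrk]
      rw [hDrk, hCk (r k - m) (by omega)] at hh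
      have : k = m := by exact_mod_cast hh
      omega
end

section
/- Let α = (A_0 ← ⋯ ← A_m) and β = (B_0 ← ⋯ ← B_n) be universal evolutions for vertices A_m and B_n of a monotonous quiver, and suppose A_m ≤ B_n. If m = n ≥ 1, then A_{m-1} ∼ B_{n-1}. If m < n, then A_m ≤ B_{n-1}. -/
universe u
variable {V : Type u} [Quiver V]

lemma anc_sub {A : ℕ → V} {N : ℕ} (h : IsEvol A N) {i j : ℕ} (hij : i ≤ j) (hj : j ≤ N) :
    Anc (A i) (A j) := by
  refine ⟨j - i, fun k => A (i + k), ?_, by simp, by simp only []; rw [Nat.add_sub_cancel' hij]⟩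
  intro k hk
  have := h (i + k) (by omega)
  simpa [Nat.add_assoc] using this
lemma height_le_full {A : ℕ → V} {m : ℕ} {X : V} (h : IsFullEvol A m X) :
    height X ≤ m := sInf_le ⟨m, rfl, A, h⟩
lemma anc_height (hmon : Monotonous V) {X Y : V} (h : Anc X Y) : height X ≤ height Y := by
  obtain ⟨p, C, hC, hC0, hCp⟩ := h
  subst hC0 hCp
  have key : ∀ k ≤ p, height (C 0) ≤ height (C k) := by
    intro k hk
    induction k with
    | zero => exact le_rfl
    | succ j ih =>
      exact (ih (by omega)).trans (hmon _ _ (hC j (by omega)))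
  exact key p le_rfl
lemma univ_height_ge {A : ℕ → V} {m : ℕ} (hA : IsUniversalEvol A m (A m)) :
    (m : ℕ∞) ≤ height (A m) := by
  refine le_sInf ?_
  rintro x ⟨q, rfl, C, hC⟩
  exact_mod_cast (hA.2 C q hC).1
lemma r_ge {r : ℕ → ℕ} {n : ℕ} (h : ∀ k < n, r k < r (k + 1)) : ∀ k ≤ n, k ≤ r k := by
  intro k hk
  induction k with
  | zero => omega
  | succ j ih => have := h j (by omega); have := ih (by omega); omega

theorem stmt_15 (hmon : Monotonous V) (A B : ℕ → V) (m n : ℕ)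
    (hA : IsUniversalEvol A m (A m)) (hB : IsUniversalEvol B n (B n))
    (hle : Anc (A m) (B n)) :
    (m = n → 1 ≤ m → Isotypic (A (m - 1)) (B (n - 1))) ∧
    (m < n → Anc (A m) (B (n - 1))) := by
  obtain ⟨t, C, hC, hC0, hCt⟩ := hle
  set D : ℕ → V := fun k => if k ≤ m then A k else C (k - m) with hD
  have hDE : IsEvol D (m + t) := by
    intro k hk
    by_cases h1 : k + 1 ≤ m
    · simpa [hD, h1, le_of_lt (Nat.lt_of_succ_le h1)] using hA.1.1 k (by omega)
    · by_cases h2 : k ≤ m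
      · have hk' : k = m := by omega
        subst hk'
        have := hC 0 (by omega)
        simpa [hD, h1, h2, hC0] using this
      · have := hC (k - m) (by omega)
        have hx : k + 1 - m = k - m + 1 := by omega
        simpa [hD, h1, h2, hx] using this
  have hDm : D m = A m := by simp [hD]
  have hDfull : IsFullEvol D (m + t) (B n) := by
    refine ⟨hDE, by simpa [hD] using hA.1.2.1, ?_⟩
    by_cases ht : t = 0
    · subst ht; simp only [hD, Nat.add_zero, if_pos le_rfl]
      rw [← hCt, ← hC0]
    · simp only [hD, show ¬ m + t ≤ m by omega, if_neg, Nat.add_sub_cancel_left]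
      · exact hCt
  obtain ⟨hmn, r, hr1, hr2, hr3⟩ := hB.2 D (m + t) hDfull
  have hrge := r_ge hr1
  constructor
  · -- m = n, 1 ≤ m
    intro hmneq h1m
    subst hmneq
    -- show r (m-1) = m-1
    have hrm1lt : r (m - 1) < r m := by
      have := hr1 (m - 1) (by omega)
      simpa [Nat.sub_add_cancel h1m] using this
    have hrm1le : r (m - 1) ≤ m + t := by omega
    have hiso : Isotypic (B (m - 1)) (D (r (m - 1))) := hr3 (m - 1) (by omega)
    have hrm1 : r (m - 1) ≤ m - 1 := by
      by_contra hcon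
      have hge : m ≤ r (m - 1) := by omega
      have hanc : Anc (A m) (D (r (m - 1))) := by
        rw [← hDm]; exact anc_sub hDE hge hrm1le
      have hBfull : IsFullEvol B (m - 1) (B (m - 1)) :=
        ⟨fun k hk => hB.1.1 k (by omega), hB.1.2.1, rfl⟩
      have h1 : (m : ℕ∞) ≤ height (D (r (m - 1))) :=
        (univ_height_ge hA).trans (anc_height hmon hanc)
      have h2 : height (D (r (m - 1))) ≤ ((m - 1 : ℕ) : ℕ∞) :=
        (anc_height hmon hiso.2).trans (height_le_full hBfull)
      have := h1.trans h2
      have : m ≤ m - 1 := by exact_mod_cast this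
      omega
    have hreq : r (m - 1) = m - 1 := le_antisymm hrm1 (hrge (m - 1) (by omega))
    have hDval : D (r (m - 1)) = A (m - 1) := by
      rw [hreq]; simp [hD, show m - 1 ≤ m by omega]
    rw [hDval] at hiso
    exact ⟨hiso.2, hiso.1⟩
  · -- m < n
    intro hlt
    have hiso : Isotypic (B (n - 1)) (D (r (n - 1))) := hr3 (n - 1) (by omega)
    have hge : m ≤ r (n - 1) := by
      have := hrge (n - 1) (by omega); omega
    have hrle : r (n - 1) ≤ m + t := by
      have := hr1 (n - 1) (by omega)
      have hx : n - 1 + 1 = n := by omega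
      rw [hx] at this; omega
    have hanc : Anc (A m) (D (r (n - 1))) := by
      rw [← hDm]; exact anc_sub hDE hge hrle
    exact anc_trans hanc hiso.2
end

section
/- Let ε > 0 and let f : X → Y be an ε-contraction between finite metric spaces (X, d) and (Y, ρ). If Y has at least two points, then ‖Y‖ < ‖X‖. If f is not a bijection, then X has at least two points and |X| = ε. -/
/-- For `ε > 0`, a map `f : X → Y` between metric spaces is an `ε`-contraction if it is
surjective and `dist (f x) (f y) = dist x y - ε` for all distinct `x, y`. -/
def IsContraction {X Y : Type*} [MetricSpace X] [MetricSpace Y] (ε : ℝ) (f : X → Y) : Prop :=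
  Function.Surjective f ∧ ∀ x y : X, x ≠ y → dist (f x) (f y) = dist x y - ε

/-- `‖X‖ = ∑_{x,y ∈ X} d(x,y)` for a finite metric space `X`. -/
noncomputable def normSum (X : Type*) [MetricSpace X] [Fintype X] : ℝ :=
  ∑ x : X, ∑ y : X, dist x y

/-- `|X|`: the minimal distance between distinct points of `X`. -/
noncomputable def minDist (X : Type*) [MetricSpace X] : ℝ :=
  sInf {r : ℝ | ∃ x y : X, x ≠ y ∧ r = dist x y}

theorem stmt_19 {X Y : Type*} [MetricSpace X] [MetricSpace Y] [Fintype X] [Fintype Y]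
    [Nonempty X] [Nonempty Y] (ε : ℝ) (hε : 0 < ε) (f : X → Y)
    (hf : IsContraction ε f) :
    (2 ≤ Fintype.card Y → normSum Y < normSum X) ∧
    (¬Function.Bijective f → 2 ≤ Fintype.card X ∧ minDist X = ε) := by
  classical
  obtain ⟨hsurj, hdist⟩ := hf
  constructor
  · intro hcard
    set g := Function.surjInv hsurj with hg
    have hginj : Function.Injective g := Function.injective_surjInv hsurj
    have hfg : ∀ y, f (g y) = y := fun y => Function.surjInv_eq hsurj y
    have key : ∀ y y' : Y, dist y y' ≤ dist (g y) (g y') := by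
      intro y y'
      rcases eq_or_ne y y' with rfl | h
      · simp
      · have hne : g y ≠ g y' := fun h' => h (hginj h')
        have := hdist (g y) (g y') hne
        rw [hfg, hfg] at this
        linarith
    obtain ⟨a, b, hab⟩ := Fintype.exists_pair_of_one_lt_card (α := Y) (by omega)
    have hstrict : dist a b < dist (g a) (g b) := by
      have hne : g a ≠ g b := fun h' => hab (hginj h')
      have := hdist (g a) (g b) hne
      rw [hfg, hfg] at this
      linarith
    have e1 : normSum Y = ∑ p : Y × Y, dist p.1 p.2 := by
      unfold normSum; exact (Fintype.sum_prod_type (f := fun p : Y × Y => dist p.1 p.2)).symm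
    have e2 : normSum X = ∑ p : X × X, dist p.1 p.2 := by
      unfold normSum; exact (Fintype.sum_prod_type (f := fun p : X × X => dist p.1 p.2)).symm
    have h1 : normSum Y < ∑ p : Y × Y, dist (g p.1) (g p.2) := by
      rw [e1]
      exact Finset.sum_lt_sum (fun p _ => key p.1 p.2)
        ⟨(a, b), Finset.mem_univ _, hstrict⟩
    have h2 : (∑ p : Y × Y, dist (g p.1) (g p.2)) ≤ normSum X := by
      rw [e2]
      have heq : (∑ p : Y × Y, dist (g p.1) (g p.2)) =
          ∑ q ∈ Finset.univ.image (fun p : Y × Y => (g p.1, g p.2)), dist q.1 q.2 := by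
        rw [Finset.sum_image]
        intro p _ q _ hpq
        have h1 : g p.1 = g q.1 := congrArg Prod.fst hpq
        have h2 : g p.2 = g q.2 := congrArg Prod.snd hpq
        exact Prod.ext (hginj h1) (hginj h2)
      rw [heq]
      exact Finset.sum_le_sum_of_subset_of_nonneg (Finset.subset_univ _)
        (fun i _ _ => dist_nonneg)
    linarith
  · intro hnb
    have hninj : ¬ Function.Injective f := fun hi => hnb ⟨hi, hsurj⟩
    obtain ⟨x, y, hfxy, hxy⟩ := Function.not_injective_iff.mp hninj
    have hd : dist x y = ε := by
      have := hdist x y hxy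
      rw [hfxy, dist_self] at this
      linarith
    refine ⟨Fintype.one_lt_card_iff.mpr ⟨x, y, hxy⟩, ?_⟩
    have hleast : IsLeast {r : ℝ | ∃ a b : X, a ≠ b ∧ r = dist a b} ε := by
      constructor
      · exact ⟨x, y, hxy, hd.symm⟩
      · rintro r ⟨a, b, hab, rfl⟩
        have := hdist a b hab
        have h0 : (0:ℝ) ≤ dist (f a) (f b) := dist_nonneg
        linarith
    exact hleast.csInf_eq
end
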